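/- The double zeta value ζ(3,2) = ∑_{n>m≥1} 1/(n³ m²) equals −(11/2)ζ(5) + 3ζ(2)ζ(3). -/

import Mathlib

open scoped BigOperators

/-- Riemann zeta value at a positive integer `s`. -/
noncomputable def zetaV (s : ℕ) : ℝ := ∑' n : ℕ, 1 / (n + 1 : ℝ) ^ s

/-- Double zeta value `ζ(s₁, s₂) = ∑_{n > m ≥ 1} 1/(n^{s₁} m^{s₂})`. -/
noncomputable def dzeta (s₁ s₂ : ℕ) : ℝ :=
  ∑' p : {q : ℕ × ℕ // q.2 < q.1 ∧ 1 ≤ q.2},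
    1 / (((p : ℕ × ℕ).1 : ℝ) ^ s₁ * ((p : ℕ × ℕ).2 : ℝ) ^ s₂)

/-- The `n`-th harmonic number `H_n = ∑_{m=1}^n 1/m`. -/
noncomputable def harmonic1 (n : ℕ) : ℝ := ∑ m ∈ Finset.range n, 1 / (m + 1 : ℝ)

/-- The generalized harmonic number `H_{n,2} = ∑_{m=1}^n 1/m²`. -/
noncomputable def harmonic2 (n : ℕ) : ℝ := ∑ m ∈ Finset.range n, 1 / (m + 1 : ℝ) ^ 2

open ENNReal


noncomputable def zE (s : ℕ) : ℝ≥0∞ := ∑' n : ℕ, ENNReal.ofReal (1 / ((n : ℝ) + 1) ^ s)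

noncomputable def dzE (a b : ℕ) : ℝ≥0∞ :=
  ∑' p : ℕ × ℕ, ENNReal.ofReal (1 / (((p.1 : ℝ) + (p.2 : ℝ) + 2) ^ a * ((p.1 : ℝ) + 1) ^ b))

noncomputable def TT (a b c : ℕ) : ℝ≥0∞ :=
  ∑' p : ℕ × ℕ, ENNReal.ofReal
    (1 / (((p.1 : ℝ) + 1) ^ a * ((p.2 : ℝ) + 1) ^ b * ((p.1 : ℝ) + (p.2 : ℝ) + 2) ^ c))

lemma swapE (F : ℕ → ℕ → ℝ≥0∞) :
    ∑' p : ℕ × ℕ, F p.1 p.2 = ∑' p : ℕ × ℕ, F p.2 p.1 := by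
  rw [← (Equiv.prodComm ℕ ℕ).tsum_eq (fun p : ℕ × ℕ => F p.2 p.1)]
  rfl

lemma tsum_gt (F : ℕ × ℕ → ℝ≥0∞) :
    ∑' p : ℕ × ℕ, (if p.2 < p.1 then F p else 0)
      = ∑' q : ℕ × ℕ, F (q.1 + q.2 + 1, q.1) := by
  have hinj : Function.Injective (fun q : ℕ × ℕ => ((q.1 + q.2 + 1, q.1) : ℕ × ℕ)) := by
    intro a b h
    simp only [Prod.mk.injEq] at h
    exact Prod.ext (by omega) (by omega)
  have hsupp : Function.support (fun p : ℕ × ℕ => if p.2 < p.1 then F p else 0)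
      ⊆ Set.range (fun q : ℕ × ℕ => ((q.1 + q.2 + 1, q.1) : ℕ × ℕ)) := by
    intro p hp
    simp only [Function.mem_support, ne_eq, ite_eq_right_iff, not_forall] at hp
    obtain ⟨h, -⟩ := hp
    exact ⟨(p.2, p.1 - p.2 - 1), by apply Prod.ext <;> dsimp only <;> omega⟩
  have key := hinj.tsum_eq (f := fun p : ℕ × ℕ => if p.2 < p.1 then F p else 0) hsupp
  rw [← key]
  refine tsum_congr fun q => ?_
  simp only
  rw [if_pos (by omega)]

lemma tsum_lt (F : ℕ × ℕ → ℝ≥0∞) :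
    ∑' p : ℕ × ℕ, (if p.1 < p.2 then F p else 0)
      = ∑' q : ℕ × ℕ, F (q.1, q.1 + q.2 + 1) := by
  have hinj : Function.Injective (fun q : ℕ × ℕ => ((q.1, q.1 + q.2 + 1) : ℕ × ℕ)) := by
    intro a b h
    simp only [Prod.mk.injEq] at h
    exact Prod.ext (by omega) (by omega)
  have hsupp : Function.support (fun p : ℕ × ℕ => if p.1 < p.2 then F p else 0)
      ⊆ Set.range (fun q : ℕ × ℕ => ((q.1, q.1 + q.2 + 1) : ℕ × ℕ)) := by
    intro p hp
    simp only [Function.mem_support, ne_eq, ite_eq_right_iff, not_forall] at hp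
    obtain ⟨h, -⟩ := hp
    exact ⟨(p.1, p.2 - p.1 - 1), by apply Prod.ext <;> dsimp only <;> omega⟩
  have key := hinj.tsum_eq (f := fun p : ℕ × ℕ => if p.1 < p.2 then F p else 0) hsupp
  rw [← key]
  refine tsum_congr fun q => ?_
  simp only
  rw [if_pos (by omega)]

lemma tsum_diag (F : ℕ × ℕ → ℝ≥0∞) :
    ∑' p : ℕ × ℕ, (if p.1 = p.2 then F p else 0) = ∑' n : ℕ, F (n, n) := by
  have hinj : Function.Injective (fun n : ℕ => ((n, n) : ℕ × ℕ)) := by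
    intro a b h; exact ((Prod.ext_iff).mp h).1
  have hsupp : Function.support (fun p : ℕ × ℕ => if p.1 = p.2 then F p else 0)
      ⊆ Set.range (fun n : ℕ => ((n, n) : ℕ × ℕ)) := by
    intro p hp
    simp only [Function.mem_support, ne_eq, ite_eq_right_iff, not_forall] at hp
    obtain ⟨h, -⟩ := hp
    exact ⟨p.1, by apply Prod.ext <;> dsimp only <;> omega⟩
  have key := hinj.tsum_eq (f := fun p : ℕ × ℕ => if p.1 = p.2 then F p else 0) hsupp
  rw [← key]
  exact tsum_congr fun n => by simp

lemma splitE (f : ℕ × ℕ → ℝ≥0∞) :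
    ∑' p : ℕ × ℕ, f p
      = (∑' q : ℕ × ℕ, f (q.1 + q.2 + 1, q.1)) + (∑' q : ℕ × ℕ, f (q.1, q.1 + q.2 + 1))
        + ∑' n : ℕ, f (n, n) := by
  have h : ∀ p : ℕ × ℕ, f p
      = (if p.2 < p.1 then f p else 0) + ((if p.1 < p.2 then f p else 0)
        + (if p.1 = p.2 then f p else 0)) := by
    intro p
    rcases lt_trichotomy p.1 p.2 with h | h | h
    · rw [if_neg (by omega), if_pos h, if_neg (by omega), zero_add, add_zero]
    · rw [if_neg (by omega), if_neg (by omega), if_pos h, zero_add, zero_add]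
    · rw [if_pos h, if_neg (by omega), if_neg (by omega), add_zero, add_zero]
  rw [tsum_congr h, ENNReal.tsum_add, ENNReal.tsum_add, tsum_gt, tsum_lt, tsum_diag, add_assoc]

lemma prodE (s t : ℕ) :
    ∑' p : ℕ × ℕ, ENNReal.ofReal (1 / (((p.1 : ℝ) + 1) ^ s * ((p.2 : ℝ) + 1) ^ t))
      = zE s * zE t := by
  rw [ENNReal.tsum_prod']
  have h1 : ∀ a b : ℕ, ENNReal.ofReal (1 / (((a : ℝ) + 1) ^ s * ((b : ℝ) + 1) ^ t))
      = ENNReal.ofReal (1 / ((a : ℝ) + 1) ^ s) * ENNReal.ofReal (1 / ((b : ℝ) + 1) ^ t) := by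
    intro a b
    rw [← ENNReal.ofReal_mul (by positivity)]
    congr 1
    rw [div_mul_div_comm, one_mul]
  calc ∑' (a : ℕ) (b : ℕ), ENNReal.ofReal (1 / (((a : ℝ) + 1) ^ s * ((b : ℝ) + 1) ^ t))
      = (∑' (a : ℕ), ENNReal.ofReal (1 / ((a : ℝ) + 1) ^ s))
          * (∑' (b : ℕ), ENNReal.ofReal (1 / ((b : ℝ) + 1) ^ t)) := by
        rw [← ENNReal.tsum_mul_right]
        refine tsum_congr fun a => ?_
        rw [← ENNReal.tsum_mul_left]
        exact tsum_congr fun b => h1 a b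
    _ = zE s * zE t := rfl

lemma stuffleE (a b : ℕ) : zE a * zE b = dzE a b + dzE b a + zE (a + b) := by
  rw [← prodE]
  rw [splitE (fun p : ℕ × ℕ => ENNReal.ofReal (1 / (((p.1 : ℝ) + 1) ^ a * ((p.2 : ℝ) + 1) ^ b)))]
  congr 1
  · congr 1
    · refine tsum_congr fun q => ?_
      congr 2
      push_cast
      ring
    · refine tsum_congr fun q => ?_
      congr 2
      push_cast
      ring
  · refine tsum_congr fun n => ?_
    congr 2
    rw [pow_add]

lemma TT_symm (a b c : ℕ) : TT a b c = TT b a c := by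
  rw [TT, swapE (fun x y : ℕ => ENNReal.ofReal
    (1 / (((x : ℝ) + 1) ^ a * ((y : ℝ) + 1) ^ b * ((x : ℝ) + (y : ℝ) + 2) ^ c)))]
  refine tsum_congr fun p => ?_
  congr 2
  ring

lemma TT_rec (a b c : ℕ) : TT (a + 1) (b + 1) c = TT a (b + 1) (c + 1) + TT (a + 1) b (c + 1) := by
  rw [TT, TT, TT, ← ENNReal.tsum_add]
  refine tsum_congr fun p => ?_
  rw [← ENNReal.ofReal_add (by positivity) (by positivity)]
  congr 1
  have hx : (0 : ℝ) < (p.1 : ℝ) + 1 := by positivity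
  have hy : (0 : ℝ) < (p.2 : ℝ) + 1 := by positivity
  have hz : (0 : ℝ) < (p.1 : ℝ) + (p.2 : ℝ) + 2 := by positivity
  field_simp
  ring

lemma TT_b0 (a c : ℕ) : TT a 0 c = dzE c a := by
  refine tsum_congr fun p => ?_
  congr 2
  rw [pow_zero]
  ring

lemma TT_a0 (b c : ℕ) : TT 0 b c = dzE c b := by
  rw [TT_symm]
  exact TT_b0 b c

lemma TT_c0 (a b : ℕ) : TT a b 0 = zE a * zE b := by
  rw [← prodE]
  refine tsum_congr fun p => ?_
  congr 2
  rw [pow_zero, mul_one]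

lemma shuffleE : zE 2 * zE 3 = dzE 2 3 + 3 * dzE 3 2 + 6 * dzE 4 1 := by
  have h230 : zE 2 * zE 3 = TT 1 3 1 + TT 2 2 1 := by
    rw [← TT_c0]
    exact TT_rec 1 2 0
  have h131 : TT 1 3 1 = dzE 2 3 + TT 1 2 2 := by
    rw [show TT 1 3 1 = TT 0 3 2 + TT 1 2 2 from TT_rec 0 2 1, TT_a0]
  have h221 : TT 2 2 1 = TT 1 2 2 + TT 1 2 2 := by
    rw [show TT 2 2 1 = TT 1 2 2 + TT 2 1 2 from TT_rec 1 1 1, TT_symm 2 1 2]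
  have h122 : TT 1 2 2 = dzE 3 2 + TT 1 1 3 := by
    rw [show TT 1 2 2 = TT 0 2 3 + TT 1 1 3 from TT_rec 0 1 2, TT_a0]
  have h113 : TT 1 1 3 = dzE 4 1 + dzE 4 1 := by
    rw [show TT 1 1 3 = TT 0 1 4 + TT 1 0 4 from TT_rec 0 0 3, TT_a0, TT_b0]
  rw [h230, h131, h221, h122, h113]
  ring


/-- the four-term telescoping summand -/
noncomputable def gg (k m : ℕ) : ℝ :=
  1 / (((m : ℝ) + 1) * ((m : ℝ) + (k : ℝ) + 2) ^ 4)
    + 1 / (((k : ℝ) + 1) * ((m : ℝ) + (k : ℝ) + 2) ^ 4)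
    + 1 / (((k : ℝ) + 1) ^ 2 * ((m : ℝ) + (k : ℝ) + 2) ^ 3)
    + 1 / (((k : ℝ) + 1) ^ 3 * ((m : ℝ) + (k : ℝ) + 2) ^ 2)

lemma gg_nonneg (k m : ℕ) : 0 ≤ gg k m := by
  unfold gg; positivity

lemma gg_key (k M : ℕ) :
    gg k M = (1 / ((k : ℝ) + 1) ^ 4) * (1 / ((M : ℝ) + 1) - 1 / ((M : ℝ) + (k : ℝ) + 2)) := by
  unfold gg
  have h1 : (0 : ℝ) < (M : ℝ) + 1 := by positivity
  have h2 : (0 : ℝ) < (k : ℝ) + 1 := by positivity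
  have h3 : (0 : ℝ) < (M : ℝ) + (k : ℝ) + 2 := by positivity
  field_simp
  ring

lemma gg_partial (k M : ℕ) :
    ∑ m ∈ Finset.range M, gg k m
      = (1 / ((k : ℝ) + 1) ^ 4)
        * (harmonic1 (k + 1) - ∑ j ∈ Finset.range (k + 1), 1 / ((M : ℝ) + (j : ℝ) + 1)) := by
  induction M with
  | zero =>
      rw [Finset.sum_range_zero, harmonic1]
      rw [show ∑ j ∈ Finset.range (k + 1), 1 / (((0 : ℕ) : ℝ) + (j : ℝ) + 1)
          = ∑ j ∈ Finset.range (k + 1), 1 / ((j : ℝ) + 1) from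
        Finset.sum_congr rfl fun j _ => by norm_num]
      ring
  | succ M ih =>
      rw [Finset.sum_range_succ, ih, gg_key]
      have h1 := Finset.sum_range_succ' (fun j : ℕ => 1 / ((M : ℝ) + (j : ℝ) + 1)) (k + 1)
      have h2 := Finset.sum_range_succ (fun j : ℕ => 1 / ((M : ℝ) + (j : ℝ) + 1)) (k + 1)
      have h4 : (1 : ℝ) / ((M : ℝ) + ((0 : ℕ) : ℝ) + 1) = 1 / ((M : ℝ) + 1) := by norm_num
      have h5 : (1 : ℝ) / ((M : ℝ) + (((k + 1 : ℕ)) : ℝ) + 1)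
          = 1 / ((M : ℝ) + (k : ℝ) + 2) := by push_cast; ring_nf
      have hcong : ∑ j ∈ Finset.range (k + 1), 1 / (((M + 1 : ℕ) : ℝ) + (j : ℝ) + 1)
          = ∑ j ∈ Finset.range (k + 1), 1 / ((M : ℝ) + (((j + 1 : ℕ)) : ℝ) + 1) :=
        Finset.sum_congr rfl fun j _ => by push_cast; ring_nf
      have h6 : ∑ j ∈ Finset.range (k + 1), 1 / ((M : ℝ) + (((j + 1 : ℕ)) : ℝ) + 1)
          = ∑ j ∈ Finset.range (k + 1), 1 / ((M : ℝ) + (j : ℝ) + 1)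
            - (1 / ((M : ℝ) + 1) - 1 / ((M : ℝ) + (k : ℝ) + 2)) := by
        linarith [h1, h2, h4, h5]
      rw [hcong, h6]
      ring

lemma summable_inv_sq : Summable (fun m : ℕ => 1 / ((m : ℝ) + 1) ^ 2) := by
  have h := Real.summable_one_div_nat_pow.mpr (le_refl 2)
  have := (summable_nat_add_iff 1).mpr h
  refine this.congr fun m => ?_
  push_cast
  ring

lemma summable_zeta (s : ℕ) (hs : 2 ≤ s) : Summable (fun n : ℕ => 1 / ((n : ℝ) + 1) ^ s) := by
  have h := Real.summable_one_div_nat_pow.mpr hs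
  have := (summable_nat_add_iff 1).mpr h
  refine this.congr fun m => ?_
  push_cast
  ring

lemma gg_summable (k : ℕ) : Summable (gg k) := by
  refine Summable.of_nonneg_of_le (gg_nonneg k) (f := fun m : ℕ => 4 * (1 / ((m : ℝ) + 1) ^ 2))
    (fun m => ?_) (summable_inv_sq.mul_left 4)
  have hm : (0 : ℝ) < (m : ℝ) + 1 := by positivity
  have hk : (1 : ℝ) ≤ (k : ℝ) + 1 := by simp
  unfold gg
  have hx : (1 : ℝ) ≤ (m : ℝ) + 1 := by simp
  have hz2 : ((m : ℝ) + 1) ^ 2 ≤ ((m : ℝ) + (k : ℝ) + 2) ^ 2 := by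
    apply pow_le_pow_left₀ (by positivity)
    have := Nat.cast_nonneg (α := ℝ) k
    linarith
  have hz1 : (1 : ℝ) ≤ (m : ℝ) + (k : ℝ) + 2 := by
    have := Nat.cast_nonneg (α := ℝ) k
    have := Nat.cast_nonneg (α := ℝ) m
    linarith
  have key : ∀ w : ℝ, 1 ≤ w → ∀ j : ℕ, 2 ≤ j →
      1 / (w * ((m : ℝ) + (k : ℝ) + 2) ^ j) ≤ 1 / ((m : ℝ) + 1) ^ 2 := by
    intro w hw j hj
    apply one_div_le_one_div_of_le (by positivity)
    calc ((m : ℝ) + 1) ^ 2 ≤ ((m : ℝ) + (k : ℝ) + 2) ^ 2 := hz2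
      _ ≤ ((m : ℝ) + (k : ℝ) + 2) ^ j := pow_le_pow_right₀ hz1 hj
      _ = 1 * ((m : ℝ) + (k : ℝ) + 2) ^ j := (one_mul _).symm
      _ ≤ w * ((m : ℝ) + (k : ℝ) + 2) ^ j :=
          mul_le_mul_of_nonneg_right hw (by positivity)
  have b1 := key ((m : ℝ) + 1) hx 4 (by norm_num)
  have b2 := key ((k : ℝ) + 1) hk 4 (by norm_num)
  have b3 := key (((k : ℝ) + 1) ^ 2) (one_le_pow₀ hk) 3 (by norm_num)
  have b4 := key (((k : ℝ) + 1) ^ 3) (one_le_pow₀ hk) 2 (by norm_num)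
  linarith

lemma gg_tsum (k : ℕ) : ∑' m : ℕ, gg k m = harmonic1 (k + 1) / ((k : ℝ) + 1) ^ 4 := by
  have h1 : Filter.Tendsto (fun M : ℕ => ∑ m ∈ Finset.range M, gg k m)
      Filter.atTop (nhds (∑' m : ℕ, gg k m)) := (gg_summable k).hasSum.tendsto_sum_nat
  have hsmall : Filter.Tendsto
      (fun M : ℕ => ∑ j ∈ Finset.range (k + 1), 1 / ((M : ℝ) + (j : ℝ) + 1))
      Filter.atTop (nhds 0) := by
    rw [show (0 : ℝ) = ∑ j ∈ Finset.range (k + 1), (0 : ℝ) by simp]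
    refine tendsto_finset_sum _ fun j _ => ?_
    have hb : Filter.Tendsto (fun M : ℕ => 1 / ((M : ℝ) + 1)) Filter.atTop (nhds 0) :=
      tendsto_one_div_add_atTop_nhds_zero_nat
    refine squeeze_zero (fun M => by positivity) (fun M => ?_) hb
    apply one_div_le_one_div_of_le (by positivity)
    have := Nat.cast_nonneg (α := ℝ) j
    linarith
  have h2 : Filter.Tendsto (fun M : ℕ => ∑ m ∈ Finset.range M, gg k m)
      Filter.atTop (nhds (harmonic1 (k + 1) / ((k : ℝ) + 1) ^ 4)) := by
    have := (Filter.Tendsto.const_sub (harmonic1 (k + 1)) hsmall).const_mul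
      (1 / ((k : ℝ) + 1) ^ 4)
    simp only [sub_zero] at this
    refine Filter.Tendsto.congr (fun M => (gg_partial k M).symm) ?_
    convert this using 2
    ring
  exact tendsto_nhds_unique h1 h2

lemma harmonic1_nonneg (n : ℕ) : 0 ≤ harmonic1 n :=
  Finset.sum_nonneg fun m _ => by positivity

lemma Hpart : ∑' k : ℕ, ENNReal.ofReal (harmonic1 k / ((k : ℝ) + 1) ^ 4) = dzE 4 1 := by
  have step1 : ∀ k : ℕ, ENNReal.ofReal (harmonic1 k / ((k : ℝ) + 1) ^ 4)
      = ∑' j : ℕ, (if j < k then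
          ENNReal.ofReal (1 / (((j : ℝ) + 1) * ((k : ℝ) + 1) ^ 4)) else 0) := by
    intro k
    rw [tsum_eq_sum (s := Finset.range k)
      (fun j hj => if_neg (fun h => hj (Finset.mem_range.mpr h)))]
    rw [show ∑ j ∈ Finset.range k, (if j < k then
          ENNReal.ofReal (1 / (((j : ℝ) + 1) * ((k : ℝ) + 1) ^ 4)) else 0)
        = ∑ j ∈ Finset.range k, ENNReal.ofReal (1 / (((j : ℝ) + 1) * ((k : ℝ) + 1) ^ 4)) from
      Finset.sum_congr rfl fun j hj => if_pos (Finset.mem_range.mp hj)]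
    rw [← ENNReal.ofReal_sum_of_nonneg (fun j _ => by positivity)]
    congr 1
    rw [harmonic1, Finset.sum_div]
    exact Finset.sum_congr rfl fun j _ => by rw [div_div]
  calc ∑' k : ℕ, ENNReal.ofReal (harmonic1 k / ((k : ℝ) + 1) ^ 4)
      = ∑' (k : ℕ) (j : ℕ), (if j < k then
          ENNReal.ofReal (1 / (((j : ℝ) + 1) * ((k : ℝ) + 1) ^ 4)) else 0) :=
        tsum_congr step1
    _ = ∑' p : ℕ × ℕ, (if p.2 < p.1 then
          ENNReal.ofReal (1 / (((p.2 : ℝ) + 1) * ((p.1 : ℝ) + 1) ^ 4)) else 0) := by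
        symm
        rw [ENNReal.tsum_prod']
    _ = ∑' q : ℕ × ℕ, ENNReal.ofReal
          (1 / (((q.1 : ℝ) + 1) * (((q.1 + q.2 + 1 : ℕ) : ℝ) + 1) ^ 4)) := by
        rw [tsum_gt (fun p : ℕ × ℕ =>
          ENNReal.ofReal (1 / (((p.2 : ℝ) + 1) * ((p.1 : ℝ) + 1) ^ 4)))]
    _ = dzE 4 1 := by
        refine tsum_congr fun q => ?_
        congr 2
        push_cast
        ring

lemma sumformE : dzE 4 1 + dzE 4 1 + dzE 3 2 + dzE 2 3 = dzE 4 1 + zE 5 := by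
  have hL : ∑' p : ℕ × ℕ, ENNReal.ofReal (gg p.1 p.2)
      = dzE 4 1 + dzE 4 1 + dzE 3 2 + dzE 2 3 := by
    have expand : ∀ p : ℕ × ℕ, ENNReal.ofReal (gg p.1 p.2)
        = ENNReal.ofReal (1 / (((p.2 : ℝ) + 1) * ((p.2 : ℝ) + (p.1 : ℝ) + 2) ^ 4))
          + ENNReal.ofReal (1 / (((p.1 : ℝ) + 1) * ((p.2 : ℝ) + (p.1 : ℝ) + 2) ^ 4))
          + ENNReal.ofReal (1 / (((p.1 : ℝ) + 1) ^ 2 * ((p.2 : ℝ) + (p.1 : ℝ) + 2) ^ 3))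
          + ENNReal.ofReal (1 / (((p.1 : ℝ) + 1) ^ 3 * ((p.2 : ℝ) + (p.1 : ℝ) + 2) ^ 2)) := by
      intro p
      rw [gg, ← ENNReal.ofReal_add (by positivity) (by positivity),
        ← ENNReal.ofReal_add (by positivity) (by positivity),
        ← ENNReal.ofReal_add (by positivity) (by positivity)]
    rw [tsum_congr expand, ENNReal.tsum_add, ENNReal.tsum_add, ENNReal.tsum_add]
    congr 1
    · congr 1
      · congr 1
        · rw [swapE (fun x y : ℕ => ENNReal.ofReal
            (1 / (((y : ℝ) + 1) * ((y : ℝ) + (x : ℝ) + 2) ^ 4)))]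
          refine tsum_congr fun p => ?_
          congr 2
          ring
        · refine tsum_congr fun p => ?_
          congr 2
          ring
      · refine tsum_congr fun p => ?_
        congr 2
        ring
    · refine tsum_congr fun p => ?_
      congr 2
      ring
  have hR : ∑' p : ℕ × ℕ, ENNReal.ofReal (gg p.1 p.2) = dzE 4 1 + zE 5 := by
    rw [ENNReal.tsum_prod']
    calc ∑' (k : ℕ) (m : ℕ), ENNReal.ofReal (gg k m)
        = ∑' k : ℕ, ENNReal.ofReal (∑' m : ℕ, gg k m) := by
          refine tsum_congr fun k => ?_
          rw [ENNReal.ofReal_tsum_of_nonneg (gg_nonneg k) (gg_summable k)]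
      _ = ∑' k : ℕ, ENNReal.ofReal (harmonic1 (k + 1) / ((k : ℝ) + 1) ^ 4) := by
          refine tsum_congr fun k => ?_
          rw [gg_tsum]
      _ = ∑' k : ℕ, (ENNReal.ofReal (harmonic1 k / ((k : ℝ) + 1) ^ 4)
            + ENNReal.ofReal (1 / ((k : ℝ) + 1) ^ 5)) := by
          refine tsum_congr fun k => ?_
          rw [← ENNReal.ofReal_add (div_nonneg (harmonic1_nonneg k) (by positivity)) (by positivity)]
          congr 1
          rw [harmonic1, Finset.sum_range_succ, ← harmonic1]
          have hk : ((k : ℝ) + 1) ≠ 0 := by positivity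
          field_simp
      _ = dzE 4 1 + zE 5 := by
          rw [ENNReal.tsum_add, Hpart]
          rfl
  rw [← hL, hR]

lemma zE_eq (s : ℕ) (hs : 2 ≤ s) : zE s = ENNReal.ofReal (zetaV s) := by
  rw [zetaV, ENNReal.ofReal_tsum_of_nonneg (fun n => by positivity) (summable_zeta s hs)]
  rfl

lemma zE_ne_top (s : ℕ) (hs : 2 ≤ s) : zE s ≠ ⊤ := by
  rw [zE_eq s hs]; exact ENNReal.ofReal_ne_top

lemma zE_toReal (s : ℕ) : (zE s).toReal = zetaV s := by
  rw [zE, ENNReal.tsum_toReal_eq (fun n => ENNReal.ofReal_ne_top), zetaV]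
  exact tsum_congr fun n => ENNReal.toReal_ofReal (by positivity)

lemma dzE_le_prod (a b : ℕ) : dzE a b ≤ zE b * zE a := by
  rw [← prodE]
  refine ENNReal.tsum_le_tsum fun p => ENNReal.ofReal_le_ofReal ?_
  apply one_div_le_one_div_of_le (by positivity)
  have h1 : ((p.2 : ℝ) + 1) ^ a ≤ ((p.1 : ℝ) + (p.2 : ℝ) + 2) ^ a :=
    pow_le_pow_left₀ (by positivity) (by have := Nat.cast_nonneg (α := ℝ) p.1; linarith) a
  calc ((p.1 : ℝ) + 1) ^ b * ((p.2 : ℝ) + 1) ^ a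
      ≤ ((p.1 : ℝ) + 1) ^ b * ((p.1 : ℝ) + (p.2 : ℝ) + 2) ^ a :=
        mul_le_mul_of_nonneg_left h1 (by positivity)
    _ = ((p.1 : ℝ) + (p.2 : ℝ) + 2) ^ a * ((p.1 : ℝ) + 1) ^ b := mul_comm _ _

lemma dzE23_ne_top : dzE 2 3 ≠ ⊤ :=
  ne_top_of_le_ne_top (ENNReal.mul_ne_top (zE_ne_top 3 (by norm_num)) (zE_ne_top 2 (by norm_num)))
    (dzE_le_prod 2 3)

lemma dzE32_ne_top : dzE 3 2 ≠ ⊤ :=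
  ne_top_of_le_ne_top (ENNReal.mul_ne_top (zE_ne_top 2 (by norm_num)) (zE_ne_top 3 (by norm_num)))
    (dzE_le_prod 3 2)

lemma dzE41_ne_top : dzE 4 1 ≠ ⊤ := by
  have hle : dzE 4 1 ≤ zE 3 * zE 2 := by
    rw [← prodE]
    refine ENNReal.tsum_le_tsum fun p => ENNReal.ofReal_le_ofReal ?_
    apply one_div_le_one_div_of_le (by positivity)
    have hx := Nat.cast_nonneg (α := ℝ) p.1
    have hy := Nat.cast_nonneg (α := ℝ) p.2
    have h1 : ((p.1 : ℝ) + 1) * ((p.2 : ℝ) + 1) ≤ ((p.1 : ℝ) + (p.2 : ℝ) + 2) ^ 2 := by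
      nlinarith
    have h2 : (((p.1 : ℝ) + 1) * ((p.2 : ℝ) + 1)) ^ 2 ≤ (((p.1 : ℝ) + (p.2 : ℝ) + 2) ^ 2) ^ 2 :=
      pow_le_pow_left₀ (by positivity) h1 2
    calc ((p.1 : ℝ) + 1) ^ 3 * ((p.2 : ℝ) + 1) ^ 2
        = ((p.1 : ℝ) + 1) * (((p.1 : ℝ) + 1) * ((p.2 : ℝ) + 1)) ^ 2 := by ring
      _ ≤ ((p.1 : ℝ) + 1) * (((p.1 : ℝ) + (p.2 : ℝ) + 2) ^ 2) ^ 2 :=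
          mul_le_mul_of_nonneg_left h2 (by positivity)
      _ = ((p.1 : ℝ) + (p.2 : ℝ) + 2) ^ 4 * ((p.1 : ℝ) + 1) ^ 1 := by ring
  exact ne_top_of_le_ne_top
    (ENNReal.mul_ne_top (zE_ne_top 3 (by norm_num)) (zE_ne_top 2 (by norm_num))) hle

def eqvD : ℕ × ℕ ≃ {q : ℕ × ℕ // q.2 < q.1 ∧ 1 ≤ q.2} where
  toFun p := ⟨(p.1 + p.2 + 2, p.1 + 1), by constructor <;> omega⟩
  invFun q := (q.val.2 - 1, q.val.1 - q.val.2 - 1)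
  left_inv p := by apply Prod.ext <;> dsimp only <;> omega
  right_inv q := by
    obtain ⟨⟨x, y⟩, hy, hx⟩ := q
    apply Subtype.ext
    apply Prod.ext <;> dsimp only <;> omega

lemma dzE_toReal : (dzE 3 2).toReal = dzeta 3 2 := by
  rw [dzE, ENNReal.tsum_toReal_eq (fun p => ENNReal.ofReal_ne_top), dzeta]
  rw [← eqvD.tsum_eq (fun q : {q : ℕ × ℕ // q.2 < q.1 ∧ 1 ≤ q.2} =>
    1 / (((q : ℕ × ℕ).1 : ℝ) ^ 3 * ((q : ℕ × ℕ).2 : ℝ) ^ 2))]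
  refine tsum_congr fun p => ?_
  rw [ENNReal.toReal_ofReal (by positivity)]
  simp only [eqvD, Equiv.coe_fn_mk]
  push_cast
  ring

theorem stmt7 : dzeta 3 2 = -(11/2) * zetaV 5 + 3 * zetaV 2 * zetaV 3 := by
  have h2 := zE_ne_top 2 (by norm_num)
  have h3 := zE_ne_top 3 (by norm_num)
  have h5 := zE_ne_top 5 (by norm_num)
  have hd23 := dzE23_ne_top
  have hd32 := dzE32_ne_top
  have hd41 := dzE41_ne_top
  have t1 : zetaV 2 * zetaV 3 = (dzE 2 3).toReal + (dzE 3 2).toReal + zetaV 5 := by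
    rw [← zE_toReal 2, ← zE_toReal 3, ← zE_toReal 5, ← ENNReal.toReal_mul, stuffleE 2 3,
      ENNReal.toReal_add (ENNReal.add_ne_top.mpr ⟨hd23, hd32⟩) h5,
      ENNReal.toReal_add hd23 hd32]
  have t2 : (dzE 4 1).toReal + (dzE 4 1).toReal + (dzE 3 2).toReal + (dzE 2 3).toReal
      = (dzE 4 1).toReal + zetaV 5 := by
    rw [← zE_toReal 5, ← ENNReal.toReal_add hd41 h5, ← sumformE,
      ENNReal.toReal_add (ENNReal.add_ne_top.mpr
        ⟨ENNReal.add_ne_top.mpr ⟨hd41, hd41⟩, hd32⟩) hd23,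
      ENNReal.toReal_add (ENNReal.add_ne_top.mpr ⟨hd41, hd41⟩) hd32,
      ENNReal.toReal_add hd41 hd41]
  have t3 : zetaV 2 * zetaV 3
      = (dzE 2 3).toReal + 3 * (dzE 3 2).toReal + 6 * (dzE 4 1).toReal := by
    have h3d : (3 : ℝ≥0∞) * dzE 3 2 ≠ ⊤ := ENNReal.mul_ne_top (by norm_num) hd32
    have h6d : (6 : ℝ≥0∞) * dzE 4 1 ≠ ⊤ := ENNReal.mul_ne_top (by norm_num) hd41
    rw [← zE_toReal 2, ← zE_toReal 3, ← ENNReal.toReal_mul, shuffleE,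
      ENNReal.toReal_add (ENNReal.add_ne_top.mpr ⟨hd23, h3d⟩) h6d,
      ENNReal.toReal_add hd23 h3d, ENNReal.toReal_mul, ENNReal.toReal_mul]
    norm_num
  rw [← dzE_toReal]
  linarith
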